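/- Let (X, 𝒜) be a measurable space, let P₁ and P₂ be probability measures on X, let L_max > 0, and let L₁, L₂ : X → ℝ be measurable losses with 0 ≤ Lᵢ(x) ≤ L_max for all x and i ∈ {1,2}. Assume that for some C ∈ [0, 2·L_max] one has L₁(x) + L₂(x) ≥ C for all x ∈ X, and that D_H²(P₁‖P₂) ≤ Γ_H for some Γ_H ≥ 0. Then for every α ∈ [0,1), the two-point prior-predictive CVaR satisfies: inf_{t ∈ ℝ} { t + (1/(1−α))·(½∫(L₁−t)₊ dP₁ + ½∫(L₂−t)₊ dP₂) } ≥ inf_{t ∈ ℝ} { t + (L_max/(1−α))·( √(((C/2 − t)/L_max)₊) − √Γ_H )₊² }. -/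

import Mathlib

/-!
Let `m = ∫ min(dP₁, dP₂)` be the overlap of the two models. Writing `√(p q) = √(min · max)`,
Cauchy–Schwarz gives `(1 - D_H²)² ≤ m (2 - m)`, hence `m ≥ (1 - √Γ_H)²`. Pointwise
`(L₁ - t)₊ + (L₂ - t)₊ ≥ 2 (C/2 - t)₊`, and integrating against `min(dP₁, dP₂)` bounds the
mixture's expected excess loss below by `(C/2 - t)₊ · m ≥ L_max (√u - √Γ_H)₊²` with
`u = (C/2 - t)₊ / L_max ≤ 1` (for `t ≥ 0`). So the two CVaR objectives compare for every `t`;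
the left one is nonnegative, which covers the case where the right one is unbounded below.
-/

open MeasureTheory

/-- Squared Hellinger divergence, computed with the dominating measure `P + Q`. -/
noncomputable def sqHellinger {X : Type*} [MeasurableSpace X] (P Q : Measure X) : ℝ :=
  1 - ∫ x, Real.sqrt ((P.rnDeriv (P + Q) x).toReal * (Q.rnDeriv (P + Q) x).toReal) ∂(P + Q)

open scoped ENNReal

section Lintegral

variable {X : Type*} [MeasurableSpace X] {μ : Measure X} {f g : X → ℝ≥0∞}

theorem lintegral_min_add_lintegral_max (hf : AEMeasurable f μ) (hg : AEMeasurable g μ) :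
    ∫⁻ x, min (f x) (g x) ∂μ + ∫⁻ x, max (f x) (g x) ∂μ = ∫⁻ x, f x ∂μ + ∫⁻ x, g x ∂μ := by
  rw [← lintegral_add_left' (hf.min hg), ← lintegral_add_left' hf]
  simp_rw [min_add_max]

/-- Cauchy–Schwarz applied to `√(f g) = √(min f g) · √(max f g)`. -/
theorem sq_lintegral_sqrt_mul_le (hf : AEMeasurable f μ) (hg : AEMeasurable g μ) :
    (∫⁻ x, (f x * g x) ^ (1 / 2 : ℝ) ∂μ) ^ 2 ≤
      (∫⁻ x, min (f x) (g x) ∂μ) * ∫⁻ x, max (f x) (g x) ∂μ := by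
  have hsqrt_sq : ∀ a : ℝ≥0∞, (a ^ (1 / 2 : ℝ)) ^ (2 : ℝ) = a := fun a => by
    rw [← ENNReal.rpow_mul]; norm_num
  have hCS := ENNReal.lintegral_mul_le_Lp_mul_Lq μ Real.HolderConjugate.two_two
    ((hf.min hg).pow_const (1 / 2 : ℝ)) ((hf.max hg).pow_const (1 / 2 : ℝ))
  simp only [Pi.mul_apply, hsqrt_sq, min_mul_max,
    ← ENNReal.mul_rpow_of_nonneg _ _ (by norm_num : (0 : ℝ) ≤ 1 / 2)] at hCS
  calc (∫⁻ x, (f x * g x) ^ (1 / 2 : ℝ) ∂μ) ^ 2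
      ≤ (((∫⁻ x, min (f x) (g x) ∂μ) * ∫⁻ x, max (f x) (g x) ∂μ) ^ (1 / 2 : ℝ)) ^ (2 : ℝ) := by
        rw [← ENNReal.rpow_natCast]; exact ENNReal.rpow_le_rpow hCS (by norm_num)
    _ = (∫⁻ x, min (f x) (g x) ∂μ) * ∫⁻ x, max (f x) (g x) ∂μ := hsqrt_sq _

end Lintegral

/-- `∫ min(dP, dQ) = 1 - TV(P, Q)`, the overlap of `P` and `Q`. -/
noncomputable def overlap {X : Type*} [MeasurableSpace X] (P Q : Measure X) : ℝ :=
  (∫⁻ x, min (P.rnDeriv (P + Q) x) (Q.rnDeriv (P + Q) x) ∂(P + Q)).toReal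

section Overlap

variable {X : Type*} [MeasurableSpace X] (P Q : Measure X)

theorem one_sub_sqHellinger_eq_toReal_lintegral [SigmaFinite P] [SigmaFinite Q] :
    1 - sqHellinger P Q =
      (∫⁻ x, (P.rnDeriv (P + Q) x * Q.rnDeriv (P + Q) x) ^ (1 / 2 : ℝ) ∂(P + Q)).toReal := by
  rw [sqHellinger, sub_sub_cancel, integral_eq_lintegral_of_nonneg_ae
    (.of_forall fun x => Real.sqrt_nonneg _) (by fun_prop)]
  congr 1
  refine lintegral_congr_ae ?_
  filter_upwards [Measure.rnDeriv_lt_top P (P + Q), Measure.rnDeriv_lt_top Q (P + Q)]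
    with x hPx hQx
  rw [Real.sqrt_eq_rpow, ← ENNReal.toReal_mul,
    ← ENNReal.ofReal_rpow_of_nonneg ENNReal.toReal_nonneg (by norm_num),
    ENNReal.ofReal_toReal (ENNReal.mul_ne_top hPx.ne hQx.ne)]

variable [IsProbabilityMeasure P] [IsProbabilityMeasure Q]

theorem lintegral_rnDeriv_add_left : ∫⁻ x, P.rnDeriv (P + Q) x ∂(P + Q) = 1 := by
  rw [Measure.lintegral_rnDeriv (Measure.AbsolutelyContinuous.rfl.add_right Q), measure_univ]

theorem lintegral_rnDeriv_add_right : ∫⁻ x, Q.rnDeriv (P + Q) x ∂(P + Q) = 1 := by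
  rw [Measure.lintegral_rnDeriv (Measure.AbsolutelyContinuous.rfl.add_right' P), measure_univ]

theorem lintegral_min_rnDeriv_le_one :
    ∫⁻ x, min (P.rnDeriv (P + Q) x) (Q.rnDeriv (P + Q) x) ∂(P + Q) ≤ 1 :=
  (lintegral_mono fun _ => min_le_left _ _).trans (lintegral_rnDeriv_add_left P Q).le

theorem overlap_le_one : overlap P Q ≤ 1 :=
  ENNReal.toReal_le_of_le_ofReal zero_le_one (by simpa using lintegral_min_rnDeriv_le_one P Q)

theorem sq_one_sub_sqHellinger_le :
    (1 - sqHellinger P Q) ^ 2 ≤ overlap P Q * (2 - overlap P Q) := by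
  have hsum := lintegral_min_add_lintegral_max (μ := P + Q)
    (Measure.measurable_rnDeriv P (P + Q)).aemeasurable
    (Measure.measurable_rnDeriv Q (P + Q)).aemeasurable
  rw [lintegral_rnDeriv_add_left, lintegral_rnDeriv_add_right] at hsum
  obtain ⟨hmin_ne_top, hmax_ne_top⟩ := ENNReal.add_ne_top.1 (by rw [hsum]; simp)
  have hmax : (∫⁻ x, max (P.rnDeriv (P + Q) x) (Q.rnDeriv (P + Q) x) ∂(P + Q)).toReal =
      2 - overlap P Q := by
    rw [overlap, eq_sub_iff_add_eq', ← ENNReal.toReal_add hmin_ne_top hmax_ne_top, hsum]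
    norm_num
  have hCS := ENNReal.toReal_mono (ENNReal.mul_ne_top hmin_ne_top hmax_ne_top)
    (sq_lintegral_sqrt_mul_le (μ := P + Q) (Measure.measurable_rnDeriv P (P + Q)).aemeasurable
      (Measure.measurable_rnDeriv Q (P + Q)).aemeasurable)
  rwa [ENNReal.toReal_mul, ENNReal.toReal_pow, hmax, ← one_sub_sqHellinger_eq_toReal_lintegral]
    at hCS

end Overlap

section OverlapBounds

variable {X : Type*} [MeasurableSpace X] {P Q : Measure X}
  [IsProbabilityMeasure P] [IsProbabilityMeasure Q]

theorem sqHellinger_nonneg : 0 ≤ sqHellinger P Q := by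
  nlinarith [sq_one_sub_sqHellinger_le P Q, sq_nonneg (overlap P Q - 1)]

theorem sq_one_sub_sqrt_le_overlap {G : ℝ} (hG1 : G ≤ 1) (hH : sqHellinger P Q ≤ G) :
    (1 - Real.sqrt G) ^ 2 ≤ overlap P Q := by
  have hG0 : 0 ≤ G := sqHellinger_nonneg.trans hH
  set g := Real.sqrt G
  set m := overlap P Q
  have hg2 : g ^ 2 = G := Real.sq_sqrt hG0
  have hg1 : g ≤ 1 := Real.sqrt_le_one.2 hG1
  have hg0 : 0 ≤ g := Real.sqrt_nonneg G
  have hm1 : m ≤ 1 := overlap_le_one P Q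
  have hbc : 0 ≤ 1 - sqHellinger P Q := by
    rw [one_sub_sqHellinger_eq_toReal_lintegral]; exact ENNReal.toReal_nonneg
  have hbc_sq : (1 - G) ^ 2 ≤ (1 - sqHellinger P Q) ^ 2 := by gcongr
  -- `(1 - m)² = 1 - m (2 - m) ≤ 1 - (1 - G)² = g² (2 - g²) ≤ (g (2 - g))²`
  have hsq : (1 - m) ^ 2 ≤ (g * (2 - g)) ^ 2 := by
    nlinarith [sq_one_sub_sqHellinger_le P Q, mul_nonneg (sq_nonneg g) (sq_nonneg (1 - g))]
  have := (pow_le_pow_iff_left₀ (by linarith) (by nlinarith) two_ne_zero).1 hsq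
  nlinarith

theorem sq_max_sqrt_sub_sqrt_le_mul_overlap {u G : ℝ} (hu0 : 0 ≤ u) (hu1 : u ≤ 1)
    (hH : sqHellinger P Q ≤ G) :
    max (Real.sqrt u - Real.sqrt G) 0 ^ 2 ≤ u * overlap P Q := by
  have hsu1 : Real.sqrt u ≤ 1 := Real.sqrt_le_one.2 hu1
  rcases le_or_gt G 1 with hG1 | hG1
  · have hdiff : max (Real.sqrt u - Real.sqrt G) 0 ≤ Real.sqrt u * (1 - Real.sqrt G) :=
      max_le (by nlinarith [Real.sqrt_nonneg G])
        (mul_nonneg (Real.sqrt_nonneg u) (by linarith [Real.sqrt_le_one.2 hG1]))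
    calc max (Real.sqrt u - Real.sqrt G) 0 ^ 2 ≤ (Real.sqrt u * (1 - Real.sqrt G)) ^ 2 := by
          gcongr
      _ = u * (1 - Real.sqrt G) ^ 2 := by rw [mul_pow, Real.sq_sqrt hu0]
      _ ≤ u * overlap P Q := by gcongr; exact sq_one_sub_sqrt_le_overlap hG1 hH
  · have hsG : 1 < Real.sqrt G := (Real.lt_sqrt zero_le_one).2 (by norm_num [hG1])
    rw [max_eq_right (by linarith), zero_pow two_ne_zero]
    exact mul_nonneg hu0 ENNReal.toReal_nonneg

end OverlapBounds

theorem mul_lintegral_min_rnDeriv_le {X : Type*} [MeasurableSpace X] {P Q ν : Measure X}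
    [P.HaveLebesgueDecomposition ν] [Q.HaveLebesgueDecomposition ν] (hP : P ≪ ν) (hQ : Q ≪ ν)
    {c : ℝ≥0∞} {f₁ f₂ : X → ℝ≥0∞} (hf₁ : AEMeasurable f₁ ν) (hf₂ : AEMeasurable f₂ ν)
    (hc : ∀ x, c ≤ f₁ x + f₂ x) :
    c * ∫⁻ x, min (P.rnDeriv ν x) (Q.rnDeriv ν x) ∂ν ≤ ∫⁻ x, f₁ x ∂P + ∫⁻ x, f₂ x ∂Q := by
  rw [← lintegral_rnDeriv_mul hP hf₁, ← lintegral_rnDeriv_mul hQ hf₂,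
    ← lintegral_add_left' (f := fun x => P.rnDeriv ν x * f₁ x)
      ((Measure.measurable_rnDeriv P ν).aemeasurable.mul hf₁)]
  refine (lintegral_const_mul_le _ _).trans (lintegral_mono fun x => ?_)
  calc c * min (P.rnDeriv ν x) (Q.rnDeriv ν x)
      ≤ (f₁ x + f₂ x) * min (P.rnDeriv ν x) (Q.rnDeriv ν x) := by gcongr; exact hc x
    _ ≤ P.rnDeriv ν x * f₁ x + Q.rnDeriv ν x * f₂ x := by
      rw [add_mul, mul_comm, mul_comm (f₂ x)]
      gcongr
      exacts [min_le_left _ _, min_le_right _ _]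

theorem mul_overlap_le_integral {X : Type*} [MeasurableSpace X] {P Q : Measure X}
    [IsProbabilityMeasure P] [IsProbabilityMeasure Q] {s : ℝ} (hs : 0 ≤ s) {g₁ g₂ : X → ℝ}
    (hg₁ : Measurable g₁) (hg₂ : Measurable g₂) (hi₁ : Integrable g₁ P) (hi₂ : Integrable g₂ Q)
    (hg₁0 : ∀ x, 0 ≤ g₁ x) (hg₂0 : ∀ x, 0 ≤ g₂ x) (hsum : ∀ x, 2 * s ≤ g₁ x + g₂ x) :
    s * overlap P Q ≤ (1 / 2) * ∫ x, g₁ x ∂P + (1 / 2) * ∫ x, g₂ x ∂Q := by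
  have h := mul_lintegral_min_rnDeriv_le (c := ENNReal.ofReal (2 * s))
    (Measure.AbsolutelyContinuous.rfl.add_right Q) (Measure.AbsolutelyContinuous.rfl.add_right' P)
    hg₁.ennreal_ofReal.aemeasurable hg₂.ennreal_ofReal.aemeasurable
    fun x => by
      rw [← ENNReal.ofReal_add (hg₁0 x) (hg₂0 x)]; exact ENNReal.ofReal_le_ofReal (hsum x)
  have hI₁ : 0 ≤ ∫ x, g₁ x ∂P := integral_nonneg hg₁0
  have hI₂ : 0 ≤ ∫ x, g₂ x ∂Q := integral_nonneg hg₂0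
  rw [← ofReal_integral_eq_lintegral_ofReal hi₁ (ae_of_all _ hg₁0),
    ← ofReal_integral_eq_lintegral_ofReal hi₂ (ae_of_all _ hg₂0), ← ENNReal.ofReal_add hI₁ hI₂,
    ← ENNReal.ofReal_toReal (ne_top_of_le_ne_top ENNReal.one_ne_top
      (lintegral_min_rnDeriv_le_one P Q)),
    ← ENNReal.ofReal_mul (by linarith),
    ENNReal.ofReal_le_ofReal_iff (add_nonneg hI₁ hI₂)] at h
  rw [overlap]
  linarith

theorem sq_max_sqrt_add_sub_le {u x β : ℝ} (hu : 0 ≤ u) (hx : 0 ≤ x) (hβ : 0 ≤ β) :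
    max (Real.sqrt (u + x) - β) 0 ^ 2 ≤ max (Real.sqrt u - β) 0 ^ 2 + x := by
  set a := Real.sqrt (u + x)
  set b := Real.sqrt u
  have hb0 : 0 ≤ b := Real.sqrt_nonneg u
  have hba : b ≤ a := Real.sqrt_le_sqrt (by linarith)
  have hab_sq : a ^ 2 = b ^ 2 + x := by rw [Real.sq_sqrt (by linarith), Real.sq_sqrt hu]
  rcases le_total a β with haβ | hβa
  · rw [max_eq_right (by linarith), zero_pow two_ne_zero]; positivity
  rw [max_eq_left (by linarith)]
  rcases le_total b β with hbβ | hβb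
  · rw [max_eq_right (by linarith)]; nlinarith
  · rw [max_eq_left (by linarith)]; nlinarith

theorem Real.iInf_le_iInf_of_nonneg {ι : Type*} {f g : ι → ℝ} (hfg : ∀ i, f i ≤ g i)
    (hg : ∀ i, 0 ≤ g i) : ⨅ i, f i ≤ ⨅ i, g i := by
  by_cases hf : BddBelow (Set.range f)
  · exact ciInf_mono hf hfg
  · rw [Real.iInf_of_not_bddBelow hf]
    exact Real.iInf_nonneg hg

theorem integral_max_sub_of_nonpos {X : Type*} [MeasurableSpace X] {P : Measure X}
    [IsProbabilityMeasure P] {L : X → ℝ} (hL : Integrable L P) (hL0 : ∀ x, 0 ≤ L x) {t : ℝ}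
    (ht : t ≤ 0) : ∫ x, max (L x - t) 0 ∂P = ∫ x, L x ∂P - t := by
  rw [integral_congr_ae (.of_forall fun x => max_eq_left (by linarith [hL0 x])),
    integral_sub hL (integrable_const t), integral_const, probReal_univ, one_smul]

noncomputable def meanExcess {X : Type*} [MeasurableSpace X] (P₁ P₂ : Measure X)
    (L₁ L₂ : X → ℝ) (t : ℝ) : ℝ :=
  (1 / 2) * ∫ x, max (L₁ x - t) 0 ∂P₁ + (1 / 2) * ∫ x, max (L₂ x - t) 0 ∂P₂

section MeanExcess

variable {X : Type*} [MeasurableSpace X] {P₁ P₂ : Measure X} {L₁ L₂ : X → ℝ}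

theorem meanExcess_nonneg (t : ℝ) : 0 ≤ meanExcess P₁ P₂ L₁ L₂ t := by
  unfold meanExcess
  have := integral_nonneg (μ := P₁) (f := fun x => max (L₁ x - t) 0) fun x => le_max_right _ _
  have := integral_nonneg (μ := P₂) (f := fun x => max (L₂ x - t) 0) fun x => le_max_right _ _
  positivity

variable [IsProbabilityMeasure P₁] [IsProbabilityMeasure P₂]

theorem meanExcess_of_nonpos (hi₁ : Integrable L₁ P₁) (hi₂ : Integrable L₂ P₂)
    (hL₁0 : ∀ x, 0 ≤ L₁ x) (hL₂0 : ∀ x, 0 ≤ L₂ x) {t : ℝ} (ht : t ≤ 0) :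
    meanExcess P₁ P₂ L₁ L₂ t = (1 / 2) * ∫ x, L₁ x ∂P₁ + (1 / 2) * ∫ x, L₂ x ∂P₂ - t := by
  rw [meanExcess, integral_max_sub_of_nonpos hi₁ hL₁0 ht, integral_max_sub_of_nonpos hi₂ hL₂0 ht]
  ring

theorem add_mul_meanExcess_nonneg (hi₁ : Integrable L₁ P₁) (hi₂ : Integrable L₂ P₂)
    (hL₁0 : ∀ x, 0 ≤ L₁ x) (hL₂0 : ∀ x, 0 ≤ L₂ x) {c : ℝ} (hc : 1 ≤ c) (t : ℝ) :
    0 ≤ t + c * meanExcess P₁ P₂ L₁ L₂ t := by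
  have hE := meanExcess_nonneg (P₁ := P₁) (P₂ := P₂) (L₁ := L₁) (L₂ := L₂) t
  rcases le_total 0 t with ht | ht
  · positivity
  · have hEt : -t ≤ meanExcess P₁ P₂ L₁ L₂ t := by
      rw [meanExcess_of_nonpos hi₁ hi₂ hL₁0 hL₂0 ht]
      have := integral_nonneg (μ := P₁) (f := L₁) hL₁0
      have := integral_nonneg (μ := P₂) (f := L₂) hL₂0
      linarith
    nlinarith

end MeanExcess

section HellingerBound

variable {X : Type*} [MeasurableSpace X] {P₁ P₂ : Measure X}
  [IsProbabilityMeasure P₁] [IsProbabilityMeasure P₂] {L₁ L₂ : X → ℝ}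

theorem mul_sq_max_sqrt_sub_le_meanExcess_of_nonneg {Lmax : ℝ} (hLmax : 0 < Lmax)
    (hL₁ : Measurable L₁) (hL₂ : Measurable L₂)
    (hL₁b : ∀ x, L₁ x ∈ Set.Icc 0 Lmax) (hL₂b : ∀ x, L₂ x ∈ Set.Icc 0 Lmax)
    {C : ℝ} (hC : C ≤ 2 * Lmax) (hsum : ∀ x, C ≤ L₁ x + L₂ x)
    {ΓH : ℝ} (hHell : sqHellinger P₁ P₂ ≤ ΓH) {t : ℝ} (ht : 0 ≤ t) :
    Lmax * max (Real.sqrt (max ((C / 2 - t) / Lmax) 0) - Real.sqrt ΓH) 0 ^ 2 ≤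
      meanExcess P₁ P₂ L₁ L₂ t := by
  have hu1 : max ((C / 2 - t) / Lmax) 0 ≤ 1 :=
    max_le ((div_le_one hLmax).2 (by linarith)) zero_le_one
  have hLu : Lmax * max ((C / 2 - t) / Lmax) 0 = max (C / 2 - t) 0 := by
    rw [mul_max_of_nonneg _ _ hLmax.le, mul_div_cancel₀ _ hLmax.ne', mul_zero]
  have hi₁ := Integrable.of_mem_Icc (μ := P₁) 0 Lmax hL₁.aemeasurable (ae_of_all _ hL₁b)
  have hi₂ := Integrable.of_mem_Icc (μ := P₂) 0 Lmax hL₂.aemeasurable (ae_of_all _ hL₂b)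
  calc Lmax * max (Real.sqrt (max ((C / 2 - t) / Lmax) 0) - Real.sqrt ΓH) 0 ^ 2
      ≤ Lmax * (max ((C / 2 - t) / Lmax) 0 * overlap P₁ P₂) := by
        gcongr
        exact sq_max_sqrt_sub_sqrt_le_mul_overlap (le_max_right _ _) hu1 hHell
    _ = max (C / 2 - t) 0 * overlap P₁ P₂ := by rw [← mul_assoc, hLu]
    _ ≤ meanExcess P₁ P₂ L₁ L₂ t := by
        refine mul_overlap_le_integral (le_max_right _ _)
          ((hL₁.sub_const t).max measurable_const) ((hL₂.sub_const t).max measurable_const)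
          (hi₁.sub (integrable_const t)).pos_part (hi₂.sub (integrable_const t)).pos_part
          (fun x => le_max_right _ _) (fun x => le_max_right _ _) fun x => ?_
        rcases le_total (C / 2 - t) 0 with h | h
        · rw [max_eq_right h]
          linarith [le_max_right (L₁ x - t) 0, le_max_right (L₂ x - t) 0]
        · rw [max_eq_left h]
          linarith [le_max_left (L₁ x - t) 0, le_max_left (L₂ x - t) 0, hsum x]

/-- For `t ≤ 0` the excess `meanExcess t` grows like `-t`, and the left side grows no faster
(`sq_max_sqrt_add_sub_le`), so this case reduces to `t = 0`. -/
theorem mul_sq_max_sqrt_sub_le_meanExcess {Lmax : ℝ} (hLmax : 0 < Lmax)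
    (hL₁ : Measurable L₁) (hL₂ : Measurable L₂)
    (hL₁b : ∀ x, L₁ x ∈ Set.Icc 0 Lmax) (hL₂b : ∀ x, L₂ x ∈ Set.Icc 0 Lmax)
    {C : ℝ} (hC : C ∈ Set.Icc 0 (2 * Lmax)) (hsum : ∀ x, C ≤ L₁ x + L₂ x)
    {ΓH : ℝ} (hHell : sqHellinger P₁ P₂ ≤ ΓH) (t : ℝ) :
    Lmax * max (Real.sqrt (max ((C / 2 - t) / Lmax) 0) - Real.sqrt ΓH) 0 ^ 2 ≤
      meanExcess P₁ P₂ L₁ L₂ t := by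
  rcases le_total 0 t with ht | ht
  · exact mul_sq_max_sqrt_sub_le_meanExcess_of_nonneg hLmax hL₁ hL₂ hL₁b hL₂b hC.2 hsum hHell ht
  have hat_zero := mul_sq_max_sqrt_sub_le_meanExcess_of_nonneg hLmax hL₁ hL₂ hL₁b hL₂b hC.2 hsum
    hHell le_rfl
  have hi₁ := Integrable.of_mem_Icc (μ := P₁) 0 Lmax hL₁.aemeasurable (ae_of_all _ hL₁b)
  have hi₂ := Integrable.of_mem_Icc (μ := P₂) 0 Lmax hL₂.aemeasurable (ae_of_all _ hL₂b)
  have hL₁0 : ∀ x, 0 ≤ L₁ x := fun x => (hL₁b x).1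
  have hL₂0 : ∀ x, 0 ≤ L₂ x := fun x => (hL₂b x).1
  rw [meanExcess_of_nonpos hi₁ hi₂ hL₁0 hL₂0 le_rfl] at hat_zero
  simp only [sub_zero] at hat_zero
  have hu : max ((C / 2 - t) / Lmax) 0 = max (C / 2 / Lmax) 0 + -t / Lmax := by
    rw [max_eq_left (div_nonneg (by linarith [hC.1]) hLmax.le),
      max_eq_left (div_nonneg (by linarith [hC.1]) hLmax.le)]
    ring
  have hshift := sq_max_sqrt_add_sub_le (le_max_right (C / 2 / Lmax) 0)
    (div_nonneg (neg_nonneg.2 ht) hLmax.le) (Real.sqrt_nonneg ΓH)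
  rw [← hu] at hshift
  rw [meanExcess_of_nonpos hi₁ hi₂ hL₁0 hL₂0 ht]
  calc Lmax * max (Real.sqrt (max ((C / 2 - t) / Lmax) 0) - Real.sqrt ΓH) 0 ^ 2
      ≤ Lmax * (max (Real.sqrt (max (C / 2 / Lmax) 0) - Real.sqrt ΓH) 0 ^ 2
          + -t / Lmax) := by gcongr
    _ = Lmax * max (Real.sqrt (max (C / 2 / Lmax) 0) - Real.sqrt ΓH) 0 ^ 2 - t := by
        field_simp; ring
    _ ≤ _ := by linarith

end HellingerBound

theorem two_point_hellinger_cvar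
    {X : Type*} [MeasurableSpace X]
    (P₁ P₂ : Measure X) [IsProbabilityMeasure P₁] [IsProbabilityMeasure P₂]
    (Lmax : ℝ) (hLmax : 0 < Lmax)
    (L₁ L₂ : X → ℝ) (hL₁ : Measurable L₁) (hL₂ : Measurable L₂)
    (hL₁b : ∀ x, L₁ x ∈ Set.Icc 0 Lmax) (hL₂b : ∀ x, L₂ x ∈ Set.Icc 0 Lmax)
    (C : ℝ) (hC : C ∈ Set.Icc 0 (2 * Lmax))
    (hsum : ∀ x, C ≤ L₁ x + L₂ x)
    (ΓH : ℝ)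
    (hHell : sqHellinger P₁ P₂ ≤ ΓH)
    (α : ℝ) (hα : α ∈ Set.Ico (0 : ℝ) 1) :
    (⨅ t : ℝ, t + (1 / (1 - α)) *
        ((1 / 2) * (∫ x, max (L₁ x - t) 0 ∂P₁)
          + (1 / 2) * (∫ x, max (L₂ x - t) 0 ∂P₂))) ≥
    ⨅ t : ℝ, t + (Lmax / (1 - α)) *
        (max (Real.sqrt (max ((C / 2 - t) / Lmax) 0) - Real.sqrt ΓH) 0) ^ 2 := by
  have h1α : 0 < 1 - α := by linarith [hα.2]
  have hcoef : 1 ≤ 1 / (1 - α) := by rw [le_div_iff₀ h1α]; linarith [hα.1]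
  refine Real.iInf_le_iInf_of_nonneg (fun t => ?_) fun t => ?_
  · have hbound := mul_sq_max_sqrt_sub_le_meanExcess hLmax hL₁ hL₂ hL₁b hL₂b hC hsum hHell t
    calc t + Lmax / (1 - α) * max (Real.sqrt (max ((C / 2 - t) / Lmax) 0) - Real.sqrt ΓH) 0 ^ 2
        = t + 1 / (1 - α) *
            (Lmax * max (Real.sqrt (max ((C / 2 - t) / Lmax) 0) - Real.sqrt ΓH) 0 ^ 2) := by
          ring
      _ ≤ t + 1 / (1 - α) * meanExcess P₁ P₂ L₁ L₂ t := by gcongr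
  · exact add_mul_meanExcess_nonneg
      (Integrable.of_mem_Icc (μ := P₁) 0 Lmax hL₁.aemeasurable (ae_of_all _ hL₁b))
      (Integrable.of_mem_Icc (μ := P₂) 0 Lmax hL₂.aemeasurable (ae_of_all _ hL₂b))
      (fun x => (hL₁b x).1) (fun x => (hL₂b x).1) hcoef t
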